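/- Let μ₁, …, μ_n be probability distributions on {−1, 1} and let T be a coupling of them (a probability distribution on {−1, 1}^n with coordinate marginals μ₁, …, μ_n). Then T is multimaximal (for every pair i, j, the probability that the i-th and j-th coordinates agree is maximal among all couplings) if and only if for every nonempty subset {i₁, …, i_k} of {1, …, n}, the probability under T of the event that the i₁-th, …, i_k-th coordinates are all equal is maximal among all couplings of the subfamily (μ_{i₁}, …, μ_{i_k}). -/
import Mathlib


abbrev Sgn : Type := ({-1, 1} : Finset ℤ)

def one : Sgn := ⟨1, by decide⟩

structure FDist (X : Type) [Fintype X] where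
  m : X → ℝ
  nonneg : ∀ x, 0 ≤ m x
  total : ∑ x, m x = 1

def push {X Y : Type} [Fintype X] [DecidableEq Y] (p : X → ℝ) (f : X → Y) : Y → ℝ :=
  fun y => ∑ x, if f x = y then p x else 0


/-- A coupling of a family of distributions on {−1,1}. -/
def IsCouplingFam {n : ℕ} (μ : Fin n → FDist Sgn) (T : FDist (Fin n → Sgn)) : Prop :=
  ∀ i : Fin n, push T.m (fun f => f i) = (μ i).m

/-- Probability that coordinates i and j agree. -/
def prEq {n : ℕ} (T : FDist (Fin n → Sgn)) (i j : Fin n) : ℝ :=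
  ∑ f, if f i = f j then T.m f else 0

/-- A coupling of the subfamily indexed by a finset I. -/
def IsCouplingSub {n : ℕ} (μ : Fin n → FDist Sgn) (I : Finset (Fin n))
    (W : FDist ({i // i ∈ I} → Sgn)) : Prop :=
  ∀ i : {i // i ∈ I}, push W.m (fun g => g i) = (μ i.1).m

def neg : Sgn := ⟨-1, by decide⟩

lemma sgn_cases (x : Sgn) : x = neg ∨ x = one := by
  obtain ⟨v, hv⟩ := x
  simp only [Finset.mem_insert, Finset.mem_singleton] at hv
  rcases hv with h | h <;> [left; right] <;> simp [neg, one, h]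

lemma neg_ne_one : (neg : Sgn) ≠ one := by decide

lemma one_ne_neg : (one : Sgn) ≠ neg := by decide

lemma sum_sgn (g : Sgn → ℝ) : ∑ x, g x = g neg + g one := by
  have h : (Finset.univ : Finset Sgn) = {neg, one} := by decide
  rw [h, Finset.sum_insert (by decide), Finset.sum_singleton]

lemma FDist.sgn_total (ν : FDist Sgn) : ν.m neg + ν.m one = 1 := by
  rw [← sum_sgn ν.m]; exact ν.total

lemma sum_ite_nonneg {X : Type} [Fintype X] (m : X → ℝ) (hm : ∀ x, 0 ≤ m x)
    (P : X → Prop) [DecidablePred P] : 0 ≤ ∑ x, if P x then m x else 0 := by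
  apply Finset.sum_nonneg; intro x _; split
  · exact hm x
  · exact le_refl 0

lemma margin_eval {n : ℕ} {μ : Fin n → FDist Sgn} {T' : FDist (Fin n → Sgn)}
    (hT' : IsCouplingFam μ T') (i : Fin n) (s : Sgn) :
    (∑ f, if f i = s then T'.m f else 0) = (μ i).m s :=
  congrFun (hT' i) s

lemma pair_ids_total {n : ℕ} (T' : FDist (Fin n → Sgn)) (i j : Fin n) :
    prEq T' i j + (∑ f, if f i = one ∧ f j = neg then T'.m f else 0)
      + (∑ f, if f i = neg ∧ f j = one then T'.m f else 0) = 1 := by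
  have point : ∀ f : Fin n → Sgn,
      (if f i = f j then T'.m f else 0) + (if f i = one ∧ f j = neg then T'.m f else 0)
      + (if f i = neg ∧ f j = one then T'.m f else 0) = T'.m f := by
    intro f
    rcases sgn_cases (f i) with h1 | h1 <;> rcases sgn_cases (f j) with h2 | h2 <;>
      simp [h1, h2, neg_ne_one, one_ne_neg]
  have key := Finset.sum_congr rfl
    (fun f (_ : f ∈ (Finset.univ : Finset (Fin n → Sgn))) => point f)
  rw [Finset.sum_add_distrib, Finset.sum_add_distrib, T'.total] at key
  exact key

lemma pair_ids_diff {n : ℕ} {μ : Fin n → FDist Sgn} {T' : FDist (Fin n → Sgn)}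
    (hT' : IsCouplingFam μ T') (i j : Fin n) :
    (∑ f, if f i = one ∧ f j = neg then T'.m f else 0)
      - (∑ f, if f i = neg ∧ f j = one then T'.m f else 0)
      = (μ i).m one - (μ j).m one := by
  have e1 : (∑ f, if f i = one ∧ f j = neg then T'.m f else 0)
      + (∑ f, if f i = one ∧ f j = one then T'.m f else 0) = (μ i).m one := by
    have point : ∀ f : Fin n → Sgn,
        (if f i = one ∧ f j = neg then T'.m f else 0)
        + (if f i = one ∧ f j = one then T'.m f else 0)
        = (if f i = one then T'.m f else 0) := by
      intro f
      rcases sgn_cases (f i) with h1 | h1 <;> rcases sgn_cases (f j) with h2 | h2 <;>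
        simp [h1, h2, neg_ne_one, one_ne_neg]
    have key := Finset.sum_congr rfl
      (fun f (_ : f ∈ (Finset.univ : Finset (Fin n → Sgn))) => point f)
    rw [Finset.sum_add_distrib, margin_eval hT' i one] at key
    exact key
  have e2 : (∑ f, if f i = neg ∧ f j = one then T'.m f else 0)
      + (∑ f, if f i = one ∧ f j = one then T'.m f else 0) = (μ j).m one := by
    have point : ∀ f : Fin n → Sgn,
        (if f i = neg ∧ f j = one then T'.m f else 0)
        + (if f i = one ∧ f j = one then T'.m f else 0)
        = (if f j = one then T'.m f else 0) := by
      intro f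
      rcases sgn_cases (f i) with h1 | h1 <;> rcases sgn_cases (f j) with h2 | h2 <;>
        simp [h1, h2, neg_ne_one, one_ne_neg]
    have key := Finset.sum_congr rfl
      (fun f (_ : f ∈ (Finset.univ : Finset (Fin n → Sgn))) => point f)
    rw [Finset.sum_add_distrib, margin_eval hT' j one] at key
    exact key
  linarith

lemma sum_sgn_ite_eq (g : Sgn → ℝ) (s : Sgn) :
    (∑ y : Sgn, if y = s then g y else 0) = g s := by
  rw [sum_sgn]
  rcases sgn_cases s with h | h <;> subst h <;> simp [neg_ne_one, one_ne_neg]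

lemma push_sum_ite {X Y : Type} [Fintype X] [Fintype Y] [DecidableEq Y]
    (m : X → ℝ) (r : X → Y) (P : Y → Prop) [DecidablePred P] :
    ∑ y, (if P y then push m r y else 0) = ∑ x, (if P (r x) then m x else 0) := by
  unfold push
  have step1 : ∀ y : Y, (if P y then ∑ x : X, if r x = y then m x else 0 else 0)
      = ∑ x : X, if y = r x then (if P y then m x else 0) else 0 := by
    intro y
    by_cases h : P y
    · simp only [h, if_true]
      apply Finset.sum_congr rfl; intro x _
      by_cases h2 : r x = y
      · simp [h2]
      · rw [if_neg h2, if_neg (fun h : y = r x => h2 h.symm)]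
    · simp [h]
  rw [Finset.sum_congr rfl (fun y _ => step1 y), Finset.sum_comm]
  apply Finset.sum_congr rfl; intro x _
  rw [Finset.sum_ite_eq' Finset.univ (r x) (fun y => if P y then m x else 0)]
  simp

lemma sum_push {X Y : Type} [Fintype X] [Fintype Y] [DecidableEq Y]
    (m : X → ℝ) (r : X → Y) : ∑ y, push m r y = ∑ x, m x := by
  have h := push_sum_ite m r (fun _ => True)
  simpa using h

lemma push_push {X Y Z : Type} [Fintype X] [Fintype Y] [Fintype Z]
    [DecidableEq Y] [DecidableEq Z] (m : X → ℝ) (r : X → Y) (e : Y → Z) :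
    push (push m r) e = push m (fun x => e (r x)) := by
  funext z
  exact push_sum_ite m r (fun y => e y = z)

lemma push_nonneg {X Y : Type} [Fintype X] [DecidableEq Y]
    (m : X → ℝ) (hm : ∀ x, 0 ≤ m x) (r : X → Y) (y : Y) : 0 ≤ push m r y := by
  apply Finset.sum_nonneg
  intro x _
  split
  · exact hm x
  · exact le_refl 0

lemma exists_max_pair {n : ℕ} (μ : Fin n → FDist Sgn) (T : FDist (Fin n → Sgn))
    (hT : IsCouplingFam μ T) (a b : Fin n) (hab : a ≠ b) :
    ∃ T' : FDist (Fin n → Sgn), IsCouplingFam μ T' ∧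
      prEq T' a b = 1 - |(μ a).m one - (μ b).m one| := by
  set pa := (μ a).m one with hpa
  set pb := (μ b).m one with hpb
  have hpa0 : 0 ≤ pa := (μ a).nonneg one
  have hpb0 : 0 ≤ pb := (μ b).nonneg one
  have hpa1 : pa ≤ 1 := by
    have h1 := FDist.sgn_total (μ a); have h2 := (μ a).nonneg neg; rw [← hpa] at h1; linarith
  have hpb1 : pb ≤ 1 := by
    have h1 := FDist.sgn_total (μ b); have h2 := (μ b).nonneg neg; rw [← hpb] at h1; linarith
  have hmnn : 0 ≤ min pa pb := le_min hpa0 hpb0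
  have hm1 : min pa pb ≤ pa := min_le_left _ _
  have hm2 : min pa pb ≤ pb := min_le_right _ _
  have hm3 : 0 ≤ 1 - pa - pb + min pa pb := by
    rcases le_total pa pb with h | h
    · rw [min_eq_left h]; linarith
    · rw [min_eq_right h]; linarith
  set c : Sgn → Sgn → ℝ := fun x y =>
    if x = one then (if y = one then min pa pb else pa - min pa pb)
    else (if y = one then pb - min pa pb else 1 - pa - pb + min pa pb) with hc
  have c11 : c one one = min pa pb := by simp [hc]
  have c1n : c one neg = pa - min pa pb := by simp [hc, neg_ne_one]
  have cn1 : c neg one = pb - min pa pb := by simp [hc, neg_ne_one]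
  have cnn : c neg neg = 1 - pa - pb + min pa pb := by simp [hc, neg_ne_one, one_ne_neg]
  have hcnn : ∀ x y, 0 ≤ c x y := by
    intro x y
    rcases sgn_cases x with hx | hx <;> rcases sgn_cases y with hy | hy <;> subst hx <;> subst hy
    · rw [cnn]; linarith
    · rw [cn1]; linarith
    · rw [c1n]; linarith
    · rw [c11]; linarith
  set D : Sgn × Sgn × (Fin n → Sgn) → ℝ := fun t => c t.1 t.2.1 * T.m t.2.2 with hD
  set φ : Sgn × Sgn × (Fin n → Sgn) → (Fin n → Sgn) :=
    fun t i => if i = b then t.2.1 else if i = a then t.1 else t.2.2 i with hφ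
  have hDnn : ∀ t, 0 ≤ D t := fun t => mul_nonneg (hcnn _ _) (T.nonneg _)
  have hDtot : (∑ t, D t) = 1 := by
    rw [Fintype.sum_prod_type]
    have inner : ∀ x : Sgn, (∑ yh : Sgn × (Fin n → Sgn), D (x, yh)) = c x neg + c x one := by
      intro x
      rw [Fintype.sum_prod_type]
      have inner2 : ∀ y : Sgn, (∑ h : Fin n → Sgn, D (x, y, h)) = c x y := by
        intro y
        simp only [hD]
        rw [← Finset.mul_sum, T.total, mul_one]
      rw [Finset.sum_congr rfl (fun y _ => inner2 y), sum_sgn (fun y => c x y)]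
    rw [Finset.sum_congr rfl (fun x _ => inner x), sum_sgn (fun x => c x neg + c x one),
      c11, c1n, cn1, cnn]
    ring
  set T' : FDist (Fin n → Sgn) :=
    ⟨push D φ, fun f => push_nonneg D hDnn φ f, by rw [sum_push]; exact hDtot⟩ with hT'def
  -- generic evaluation of the pushforward over an ite family
  have eval_sum : ∀ (P : (Fin n → Sgn) → Prop) [DecidablePred P],
      (∑ f, if P f then T'.m f else 0) = ∑ t, if P (φ t) then D t else 0 := by
    intro P _
    exact push_sum_ite D φ P
  have hφ_at_b : ∀ t, φ t b = t.2.1 := by intro t; simp [hφ]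
  have hφ_at_a : ∀ t, φ t a = t.1 := by intro t; simp [hφ, hab]
  refine ⟨T', ?_, ?_⟩
  · intro i
    have hcomp : push T'.m (fun f => f i) = push D (fun t => φ t i) := push_push D φ _
    rw [hcomp]
    funext s
    show (∑ t, if φ t i = s then D t else 0) = (μ i).m s
    by_cases hib : i = b
    · have key : (∑ t, if φ t i = s then D t else 0) = ∑ x : Sgn, c x s := by
        rw [Fintype.sum_prod_type]
        apply Finset.sum_congr rfl
        intro x _
        rw [Fintype.sum_prod_type]
        have inner2 : ∀ y : Sgn, (∑ h : Fin n → Sgn, if φ (x, y, h) i = s then D (x, y, h) else 0)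
            = if y = s then c x y else 0 := by
          intro y
          have : ∀ h : Fin n → Sgn, φ (x, y, h) i = y := by
            intro h; rw [hib]; exact hφ_at_b (x, y, h)
          simp only [this, hD]
          split
          · rw [← Finset.mul_sum, T.total, mul_one]
          · simp
        rw [Finset.sum_congr rfl (fun y _ => inner2 y), sum_sgn_ite_eq (fun y => c x y) s]
      rw [key, sum_sgn (fun x => c x s), hib]
      rcases sgn_cases s with hs | hs <;> subst hs
      · have hbn : (μ b).m neg = 1 - pb := by
          have h1 := FDist.sgn_total (μ b); rw [← hpb] at h1; linarith
        rw [hbn, c1n, cnn]; ring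
      · rw [← hpb, c11, cn1]; ring
    · by_cases hia : i = a
      · have key : (∑ t, if φ t i = s then D t else 0)
            = ∑ x : Sgn, if x = s then c x neg + c x one else 0 := by
          rw [Fintype.sum_prod_type]
          apply Finset.sum_congr rfl
          intro x _
          rw [Fintype.sum_prod_type]
          have inner2 : ∀ y : Sgn, (∑ h : Fin n → Sgn, if φ (x, y, h) i = s then D (x, y, h) else 0)
              = if x = s then c x y else 0 := by
            intro y
            have : ∀ h : Fin n → Sgn, φ (x, y, h) i = x := by
              intro h; rw [hia]; exact hφ_at_a (x, y, h)
            simp only [this, hD]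
            split
            · rw [← Finset.mul_sum, T.total, mul_one]
            · simp
          rw [Finset.sum_congr rfl (fun y _ => inner2 y), sum_sgn (fun y => if x = s then c x y else 0)]
          split
          · rfl
          · rw [add_zero]
        rw [key, sum_sgn_ite_eq (fun x => c x neg + c x one) s, hia]
        rcases sgn_cases s with hs | hs <;> subst hs
        · have han : (μ a).m neg = 1 - pa := by
            have h1 := FDist.sgn_total (μ a); rw [← hpa] at h1; linarith
          rw [han, cnn, cn1]; ring
        · rw [← hpa, c1n, c11]; ring
      · have key : (∑ t, if φ t i = s then D t else 0)
            = ∑ x : Sgn, ∑ y : Sgn, c x y * (μ i).m s := by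
          rw [Fintype.sum_prod_type]
          apply Finset.sum_congr rfl
          intro x _
          rw [Fintype.sum_prod_type]
          apply Finset.sum_congr rfl
          intro y _
          have hφi : ∀ h : Fin n → Sgn, φ (x, y, h) i = h i := by
            intro h; simp [hφ, hib, hia]
          simp only [hφi, hD]
          have point : ∀ h : Fin n → Sgn, (if h i = s then c x y * T.m h else 0)
              = c x y * (if h i = s then T.m h else 0) := by
            intro h; split
            · rfl
            · rw [mul_zero]
          rw [Finset.sum_congr rfl (fun h _ => point h), ← Finset.mul_sum, margin_eval hT i s]
        rw [key]
        rw [Finset.sum_congr rfl (fun x (_ : x ∈ Finset.univ) =>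
          sum_sgn (fun y => c x y * (μ i).m s)), sum_sgn
            (fun x => c x neg * (μ i).m s + c x one * (μ i).m s), c11, c1n, cn1, cnn]
        ring
  · show (∑ f, if f a = f b then T'.m f else 0) = _
    rw [eval_sum (fun f => f a = f b)]
    have key : (∑ t, if φ t a = φ t b then D t else 0)
        = ∑ x : Sgn, ∑ y : Sgn, if x = y then c x y else 0 := by
      rw [Fintype.sum_prod_type]
      apply Finset.sum_congr rfl
      intro x _
      rw [Fintype.sum_prod_type]
      apply Finset.sum_congr rfl
      intro y _
      have h1 : ∀ h : Fin n → Sgn, φ (x, y, h) a = x := fun h => hφ_at_a (x, y, h)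
      have h2 : ∀ h : Fin n → Sgn, φ (x, y, h) b = y := fun h => hφ_at_b (x, y, h)
      simp only [h1, h2, hD]
      split
      · rw [← Finset.mul_sum, T.total, mul_one]
      · simp
    rw [key, sum_sgn (fun x => ∑ y : Sgn, if x = y then c x y else 0),
      sum_sgn (fun y => if neg = y then c neg y else 0),
      sum_sgn (fun y => if one = y then c one y else 0)]
    rw [if_pos rfl, if_pos rfl, if_neg neg_ne_one, if_neg one_ne_neg, cnn, c11]
    rcases le_total pa pb with h | h
    · rw [min_eq_left h, abs_of_nonpos (by linarith)]; ring
    · rw [min_eq_right h, abs_of_nonneg (by linarith)]; ring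

lemma D_max {n : ℕ} {μ : Fin n → FDist Sgn} {T : FDist (Fin n → Sgn)}
    (hT : IsCouplingFam μ T)
    (hmax : ∀ i j : Fin n, ∀ T' : FDist (Fin n → Sgn), IsCouplingFam μ T' →
        prEq T' i j ≤ prEq T i j) (i j : Fin n) :
    (∑ f, if f i = one ∧ f j = neg then T.m f else 0)
      = max ((μ i).m one - (μ j).m one) 0 := by
  by_cases hij : i = j
  · subst hij
    rw [sub_self, max_self]
    apply Finset.sum_eq_zero
    intro f _
    rw [if_neg]
    rintro ⟨h1, h2⟩
    exact one_ne_neg (h1.symm.trans h2)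
  · obtain ⟨T', hT', hval⟩ := exists_max_pair μ T hT i j hij
    have hub := hmax i j T' hT'
    rw [hval] at hub
    have h1 := pair_ids_total T i j
    have h2 := pair_ids_diff hT i j
    have hA : 0 ≤ ∑ f, if f i = one ∧ f j = neg then T.m f else 0 :=
      sum_ite_nonneg T.m T.nonneg _
    have hB : 0 ≤ ∑ f, if f i = neg ∧ f j = one then T.m f else 0 :=
      sum_ite_nonneg T.m T.nonneg _
    rcases le_total ((μ i).m one) ((μ j).m one) with h | h
    · rw [abs_of_nonpos (by linarith)] at hub
      rw [max_eq_right (by linarith)]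
      linarith
    · rw [abs_of_nonneg (by linarith)] at hub
      rw [max_eq_left (by linarith)]
      linarith

/-- A coupling T of (μ₁,…,μ_n) is multimaximal (all pairwise agreement probabilities
are maximal among couplings) iff for every nonempty subset I of indices, the probability
that all coordinates in I are equal is maximal among all couplings of the subfamily. -/
theorem stmt6 (n : ℕ) (μ : Fin n → FDist Sgn) (T : FDist (Fin n → Sgn))
    (hT : IsCouplingFam μ T) :
    (∀ i j : Fin n, ∀ T' : FDist (Fin n → Sgn), IsCouplingFam μ T' →
        prEq T' i j ≤ prEq T i j)
    ↔
    (∀ I : Finset (Fin n), I.Nonempty →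
      ∀ W : FDist ({i // i ∈ I} → Sgn), IsCouplingSub μ I W →
        (∑ g : {i // i ∈ I} → Sgn, if (∀ i j : {i // i ∈ I}, g i = g j) then W.m g else 0)
        ≤ ∑ f : Fin n → Sgn, if (∀ i ∈ I, ∀ j ∈ I, f i = f j) then T.m f else 0) := by
  constructor
  · -- forward direction
    intro hmax I hI W hW
    obtain ⟨a, haI, ha⟩ := I.exists_min_image (fun i => (μ i).m one) hI
    obtain ⟨b, hbI, hb⟩ := I.exists_max_image (fun i => (μ i).m one) hI
    have hab : (μ a).m one ≤ (μ b).m one := hb a haI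
    have Wub : (∑ g : {i // i ∈ I} → Sgn, if (∀ i j : {i // i ∈ I}, g i = g j) then W.m g else 0)
        ≤ (μ a).m one + (1 - (μ b).m one) := by
      have point : ∀ g : {i // i ∈ I} → Sgn,
          (if (∀ i j : {i // i ∈ I}, g i = g j) then W.m g else 0)
          ≤ (if g ⟨a, haI⟩ = one then W.m g else 0) + (if g ⟨b, hbI⟩ = neg then W.m g else 0) := by
        intro g
        have t1 : (0:ℝ) ≤ if g ⟨a, haI⟩ = one then W.m g else 0 := by
          split; exacts [W.nonneg g, le_refl 0]
        have t2 : (0:ℝ) ≤ if g ⟨b, hbI⟩ = neg then W.m g else 0 := by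
          split; exacts [W.nonneg g, le_refl 0]
        by_cases hc : ∀ i j : {i // i ∈ I}, g i = g j
        · rw [if_pos hc]
          rcases sgn_cases (g ⟨a, haI⟩) with h1 | h1
          · have h2 : g ⟨b, hbI⟩ = neg := (hc ⟨b, hbI⟩ ⟨a, haI⟩).trans h1
            rw [if_pos h2]
            linarith
          · rw [if_pos h1]
            linarith
        · rw [if_neg hc]
          linarith
      have step := Finset.sum_le_sum (fun g (_ : g ∈ (Finset.univ : Finset ({i // i ∈ I} → Sgn))) => point g)
      rw [Finset.sum_add_distrib] at step
      have ma : (∑ g : {i // i ∈ I} → Sgn, if g ⟨a, haI⟩ = one then W.m g else 0)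
          = (μ a).m one := congrFun (hW ⟨a, haI⟩) one
      have mb : (∑ g : {i // i ∈ I} → Sgn, if g ⟨b, hbI⟩ = neg then W.m g else 0)
          = (μ b).m neg := congrFun (hW ⟨b, hbI⟩) neg
      have mbv : (μ b).m neg = 1 - (μ b).m one := by
        have := FDist.sgn_total (μ b); linarith
      rw [ma, mb, mbv] at step
      exact step
    have Tlb : (μ a).m one + (1 - (μ b).m one)
        ≤ ∑ f : Fin n → Sgn, if (∀ i ∈ I, ∀ j ∈ I, f i = f j) then T.m f else 0 := by
      have hsplit : (∑ f : Fin n → Sgn, if (∀ i ∈ I, ∀ j ∈ I, f i = f j) then T.m f else 0)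
          = 1 - ∑ f : Fin n → Sgn, if ¬(∀ i ∈ I, ∀ j ∈ I, f i = f j) then T.m f else 0 := by
        have point : ∀ f : Fin n → Sgn,
            (if (∀ i ∈ I, ∀ j ∈ I, f i = f j) then T.m f else 0)
            = T.m f - (if ¬(∀ i ∈ I, ∀ j ∈ I, f i = f j) then T.m f else 0) := by
          intro f
          by_cases hc : (∀ i ∈ I, ∀ j ∈ I, f i = f j)
          · rw [if_pos hc, if_neg (not_not_intro hc)]; ring
          · rw [if_neg hc, if_pos hc]; ring
        rw [Finset.sum_congr rfl (fun f (_ : f ∈ (Finset.univ : Finset (Fin n → Sgn))) => point f),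
          Finset.sum_sub_distrib, T.total]
      rw [hsplit]
      have Nbound : (∑ f : Fin n → Sgn, if ¬(∀ i ∈ I, ∀ j ∈ I, f i = f j) then T.m f else 0)
          ≤ (μ b).m one - (μ a).m one := by
        have point : ∀ f : Fin n → Sgn,
            (if ¬(∀ i ∈ I, ∀ j ∈ I, f i = f j) then T.m f else 0)
            ≤ (if f b = one ∧ f a = neg then T.m f else 0)
              + (∑ i ∈ I, if f i = one ∧ f b = neg then T.m f else 0)
              + (∑ i ∈ I, if f a = one ∧ f i = neg then T.m f else 0) := by
          intro f
          have t1 : (0:ℝ) ≤ if f b = one ∧ f a = neg then T.m f else 0 := by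
            split; exacts [T.nonneg f, le_refl 0]
          have t2 : (0:ℝ) ≤ ∑ i ∈ I, if f i = one ∧ f b = neg then T.m f else 0 :=
            Finset.sum_nonneg (fun i _ => by split; exacts [T.nonneg f, le_refl 0])
          have t3 : (0:ℝ) ≤ ∑ i ∈ I, if f a = one ∧ f i = neg then T.m f else 0 :=
            Finset.sum_nonneg (fun i _ => by split; exacts [T.nonneg f, le_refl 0])
          by_cases hc : (∀ i ∈ I, ∀ j ∈ I, f i = f j)
          · rw [if_neg (not_not_intro hc)]
            linarith
          · rw [if_pos hc]
            push_neg at hc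
            obtain ⟨i0, hi0, j0, hj0, hne⟩ := hc
            have hex : ∃ u ∈ I, f u = one ∧ ∃ v ∈ I, f v = neg := by
              rcases sgn_cases (f i0) with h1 | h1 <;> rcases sgn_cases (f j0) with h2 | h2
              · exact absurd (h1.trans h2.symm) hne
              · exact ⟨j0, hj0, h2, i0, hi0, h1⟩
              · exact ⟨i0, hi0, h1, j0, hj0, h2⟩
              · exact absurd (h1.trans h2.symm) hne
            obtain ⟨u, hu, hfu, v, hv, hfv⟩ := hex
            have nn2 : ∀ i : Fin n, (0:ℝ) ≤ if f i = one ∧ f b = neg then T.m f else 0 :=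
              fun i => by split; exacts [T.nonneg f, le_refl 0]
            have nn3 : ∀ i : Fin n, (0:ℝ) ≤ if f a = one ∧ f i = neg then T.m f else 0 :=
              fun i => by split; exacts [T.nonneg f, le_refl 0]
            rcases sgn_cases (f b) with hB | hB
            · have hs : (if f u = one ∧ f b = neg then T.m f else 0)
                  ≤ ∑ i ∈ I, if f i = one ∧ f b = neg then T.m f else 0 :=
                Finset.single_le_sum (fun i _ => nn2 i) hu
              rw [if_pos ⟨hfu, hB⟩] at hs
              linarith
            · rcases sgn_cases (f a) with hA | hA
              · have hs : T.m f ≤ if f b = one ∧ f a = neg then T.m f else 0 := by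
                  rw [if_pos ⟨hB, hA⟩]
                linarith
              · have hs : (if f a = one ∧ f v = neg then T.m f else 0)
                    ≤ ∑ i ∈ I, if f a = one ∧ f i = neg then T.m f else 0 :=
                  Finset.single_le_sum (fun i _ => nn3 i) hv
                rw [if_pos ⟨hA, hfv⟩] at hs
                linarith
        have step := Finset.sum_le_sum
          (fun f (_ : f ∈ (Finset.univ : Finset (Fin n → Sgn))) => point f)
        rw [Finset.sum_add_distrib, Finset.sum_add_distrib] at step
        have swap2 : (∑ f : Fin n → Sgn, ∑ i ∈ I, if f i = one ∧ f b = neg then T.m f else 0)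
            = ∑ i ∈ I, ∑ f : Fin n → Sgn, if f i = one ∧ f b = neg then T.m f else 0 :=
          Finset.sum_comm
        have swap3 : (∑ f : Fin n → Sgn, ∑ i ∈ I, if f a = one ∧ f i = neg then T.m f else 0)
            = ∑ i ∈ I, ∑ f : Fin n → Sgn, if f a = one ∧ f i = neg then T.m f else 0 :=
          Finset.sum_comm
        rw [swap2, swap3] at step
        have e1 : (∑ f : Fin n → Sgn, if f b = one ∧ f a = neg then T.m f else 0)
            = (μ b).m one - (μ a).m one := by
          rw [D_max hT hmax b a]
          exact max_eq_left (by linarith)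
        have e2 : (∑ i ∈ I, ∑ f : Fin n → Sgn, if f i = one ∧ f b = neg then T.m f else 0) = 0 := by
          apply Finset.sum_eq_zero
          intro i hi
          rw [D_max hT hmax i b]
          exact max_eq_right (by linarith [hb i hi])
        have e3 : (∑ i ∈ I, ∑ f : Fin n → Sgn, if f a = one ∧ f i = neg then T.m f else 0) = 0 := by
          apply Finset.sum_eq_zero
          intro i hi
          rw [D_max hT hmax a i]
          exact max_eq_right (by linarith [ha i hi])
        rw [e1, e2, e3] at step
        linarith
      linarith
    exact le_trans Wub Tlb
  · -- backward direction
    intro hsub i j T' hT'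
    by_cases hij : i = j
    · subst hij
      have h1 : prEq T' i i = 1 := by
        unfold prEq
        rw [Finset.sum_congr rfl (fun f (_ : f ∈ (Finset.univ : Finset (Fin n → Sgn))) =>
          if_pos rfl)]
        exact T'.total
      have h2 : prEq T i i = 1 := by
        unfold prEq
        rw [Finset.sum_congr rfl (fun f (_ : f ∈ (Finset.univ : Finset (Fin n → Sgn))) =>
          if_pos rfl)]
        exact T.total
      rw [h1, h2]
    · set I : Finset (Fin n) := {i, j} with hIdef
      have hiI : i ∈ I := Finset.mem_insert_self i {j}
      have hjI : j ∈ I := Finset.mem_insert_of_mem (Finset.mem_singleton_self j)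
      have hInonempty : I.Nonempty := ⟨i, hiI⟩
      set r : (Fin n → Sgn) → ({x // x ∈ I} → Sgn) := fun f k => f k.1 with hr
      set W : FDist ({x // x ∈ I} → Sgn) :=
        ⟨push T'.m r, fun g => push_nonneg T'.m T'.nonneg r g,
          by rw [sum_push]; exact T'.total⟩ with hWdef
      have hWsub : IsCouplingSub μ I W := by
        intro k
        have hcomp : push W.m (fun g => g k) = push T'.m (fun f => r f k) := push_push T'.m r _
        rw [hcomp]
        exact hT' k.1
      have key := hsub I hInonempty W hWsub
      have memI : ∀ k : Fin n, k ∈ I → k = i ∨ k = j := by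
        intro k hk
        rcases Finset.mem_insert.mp hk with h | h
        · exact Or.inl h
        · exact Or.inr (Finset.mem_singleton.mp h)
      have lhs_eq : (∑ g : {x // x ∈ I} → Sgn, if (∀ k l : {x // x ∈ I}, g k = g l) then W.m g else 0)
          = prEq T' i j := by
        have hpush := push_sum_ite T'.m r (fun g => ∀ k l : {x // x ∈ I}, g k = g l)
        rw [hpush]
        unfold prEq
        apply Finset.sum_congr rfl
        intro f _
        apply if_congr _ rfl rfl
        constructor
        · intro h
          exact h ⟨i, hiI⟩ ⟨j, hjI⟩
        · intro h k l
          show f k.1 = f l.1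
          rcases memI k.1 k.2 with hk | hk <;> rcases memI l.1 l.2 with hl | hl <;>
            rw [hk, hl]
          · exact h
          · exact h.symm
      have rhs_eq : (∑ f : Fin n → Sgn, if (∀ k ∈ I, ∀ l ∈ I, f k = f l) then T.m f else 0)
          = prEq T i j := by
        unfold prEq
        apply Finset.sum_congr rfl
        intro f _
        apply if_congr _ rfl rfl
        constructor
        · intro h
          exact h i hiI j hjI
        · intro h k hk l hl
          rcases memI k hk with hk' | hk' <;> rcases memI l hl with hl' | hl' <;>
            rw [hk', hl']
          · exact h
          · exact h.symm
      rw [lhs_eq, rhs_eq] at key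
      exact key
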